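/- arXiv:1512.06905 — 4 statements merged into one kernel-verified Lean document; each statement's English description precedes it below -/
import Mathlib

section
/- Let f, g¹,…,g^m : [0,T] × ℝ^d → ℝ^d satisfy the global monotonicity condition ⟨f(t,x₁)-f(t,x₂), x₁-x₂⟩ + η ∑_{r=1}^m |g^r(t,x₁)-g^r(t,x₂)|² ≤ L|x₁-x₂|², where L > 0 and η > 1/2, and suppose f satisfies the local Lipschitz bound |f(t,x₁)-f(t,x₂)| ≤ L(1+|x₁|+|x₂|)^{q-1}|x₁-x₂| with q ≥ 2. Fix α ∈ (0, 1/(2(q-1))] and δ ∈ (0,1], and let x° = min(1, δ^{-α}|x|^{-1})x. Then there exists a constant C depending only on L such that for all t ∈ [0,T] and x₁, x₂ ∈ ℝ^d: |x₁° - x₂° + δ(f(t,x₁°) - f(t,x₂°))|² + 2ηδ ∑_{r=1}^m |g^r(t,x₁°) - g^r(t,x₂°)|² ≤ (1 + Cδ)|x₁ - x₂|². -/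
/-!
The projection `x ↦ x°` onto a closed ball is nonexpansive, and both `x₁°` and `x₂°` lie in the
ball of radius `R = δ^(-α)`. Expanding the square, the monotonicity condition absorbs the cross
term together with the `g`-terms, while on the ball `f` is Lipschitz with constant
`K = L (3R)^(q-1)`, so the remaining term `δ²‖f(x₁°) - f(x₂°)‖²` is at most `δ K² · δ ‖x₁° - x₂°‖²`.
The choice `α (q-1) ≤ 1/2` is exactly what makes `δ K²` bounded uniformly in `δ ∈ (0, 1]`.
-/

open scoped RealInnerProductSpace

/-- Projection of `x ∈ ℝ^d` onto the closed ball of radius `δ^(-α)`. -/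
noncomputable def ballProj {d : ℕ} (δ α : ℝ) (x : EuclideanSpace ℝ (Fin d)) :
    EuclideanSpace ℝ (Fin d) :=
  min 1 (δ ^ (-α) * ‖x‖⁻¹) • x

section

variable {E : Type*} [NormedAddCommGroup E] [InnerProductSpace ℝ E]

/-- The nearest-point projection onto `Metric.closedBall 0 R`. -/
noncomputable def radialRetraction (R : ℝ) (x : E) : E :=
  min 1 (R * ‖x‖⁻¹) • x

theorem ballProj_eq_radialRetraction {d : ℕ} (δ α : ℝ) (x : EuclideanSpace ℝ (Fin d)) :
    ballProj δ α x = radialRetraction (δ ^ (-α)) x :=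
  rfl

theorem radialRetraction_of_norm_le {R : ℝ} {x : E} (hx : ‖x‖ ≤ R) :
    radialRetraction R x = x := by
  rcases eq_or_ne x 0 with rfl | hx0
  · simp [radialRetraction]
  have hxpos : 0 < ‖x‖ := norm_pos_iff.mpr hx0
  have h1 : 1 ≤ R * ‖x‖⁻¹ := by rwa [← div_eq_mul_inv, one_le_div hxpos]
  simp [radialRetraction, min_eq_left h1]

theorem radialRetraction_of_le_norm {R : ℝ} {x : E} (hx : R ≤ ‖x‖) :
    radialRetraction R x = (R / ‖x‖) • x := by
  rcases eq_or_ne x 0 with rfl | hx0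
  · simp [radialRetraction]
  have hxpos : 0 < ‖x‖ := norm_pos_iff.mpr hx0
  have h1 : R * ‖x‖⁻¹ ≤ 1 := by rwa [← div_eq_mul_inv, div_le_one hxpos]
  rw [radialRetraction, min_eq_right h1, div_eq_mul_inv]

theorem norm_radialRetraction_le {R : ℝ} (hR : 0 ≤ R) (x : E) :
    ‖radialRetraction R x‖ ≤ R := by
  rcases le_total ‖x‖ R with hx | hx
  · rwa [radialRetraction_of_norm_le hx]
  · rw [radialRetraction_of_le_norm hx, norm_smul, Real.norm_of_nonneg (by positivity)]
    rcases eq_or_ne ‖x‖ 0 with h | h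
    · simp [h, hR]
    · rw [div_mul_cancel₀ R h]

theorem inner_sub_radialRetraction_nonpos {R : ℝ} (x : E) {z : E} (hz : ‖z‖ ≤ R) :
    ⟪x - radialRetraction R x, z - radialRetraction R x⟫ ≤ 0 := by
  rcases le_total ‖x‖ R with hx | hx
  · simp [radialRetraction_of_norm_le hx]
  rcases eq_or_ne x 0 with rfl | hx0
  · simp [radialRetraction]
  have hxpos : 0 < ‖x‖ := norm_pos_iff.mpr hx0
  rw [radialRetraction_of_le_norm hx]
  set c := R / ‖x‖
  have hc : c ≤ 1 := (div_le_one hxpos).mpr hx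
  have hcx : c * ‖x‖ = R := div_mul_cancel₀ R hxpos.ne'
  have hxz : ⟪x, z⟫ ≤ ‖x‖ * R :=
    (real_inner_le_norm x z).trans (mul_le_mul_of_nonneg_left hz hxpos.le)
  rw [show x - c • x = (1 - c) • x by rw [sub_smul, one_smul], real_inner_smul_left,
    inner_sub_right, real_inner_smul_right, real_inner_self_eq_norm_sq]
  refine mul_nonpos_of_nonneg_of_nonpos (sub_nonneg.mpr hc) ?_
  nlinarith

/-- The mechanism behind the nonexpansiveness of projections onto convex sets. -/
theorem norm_sub_le_of_inner_sub_nonpos {x y a b : E} (ha : ⟪x - a, b - a⟫ ≤ 0)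
    (hb : ⟪y - b, a - b⟫ ≤ 0) : ‖a - b‖ ≤ ‖x - y‖ := by
  have hsq : ‖a - b‖ ^ 2 ≤ ⟪x - y, a - b⟫ := by
    have h : ⟪x - y, a - b⟫ - ‖a - b‖ ^ 2 = -⟪x - a, b - a⟫ - ⟪y - b, a - b⟫ := by
      rw [← real_inner_self_eq_norm_sq]
      simp only [inner_sub_left, inner_sub_right]
      ring
    linarith
  have hcs := real_inner_le_norm (x - y) (a - b)
  nlinarith [norm_nonneg (a - b), norm_nonneg (x - y)]

theorem norm_radialRetraction_sub_le {R : ℝ} (hR : 0 ≤ R) (x y : E) :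
    ‖radialRetraction R x - radialRetraction R y‖ ≤ ‖x - y‖ :=
  norm_sub_le_of_inner_sub_nonpos
    (inner_sub_radialRetraction_nonpos x (norm_radialRetraction_le hR y))
    (inner_sub_radialRetraction_nonpos y (norm_radialRetraction_le hR x))

theorem norm_add_smul_sq_add_le {a F : E} {G L K δ η : ℝ} (hδ : 0 ≤ δ)
    (hmono : ⟪F, a⟫ + η * G ≤ L * ‖a‖ ^ 2) (hF : ‖F‖ ≤ K * ‖a‖) :
    ‖a + δ • F‖ ^ 2 + 2 * η * δ * G ≤ (1 + (2 * L + δ * K ^ 2) * δ) * ‖a‖ ^ 2 := by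
  have hF2 : ‖F‖ ^ 2 ≤ K ^ 2 * ‖a‖ ^ 2 := by
    rw [← mul_pow]
    exact pow_le_pow_left₀ (norm_nonneg F) hF 2
  have hcross := mul_le_mul_of_nonneg_left hmono (by positivity : (0 : ℝ) ≤ 2 * δ)
  have hdrift := mul_le_mul_of_nonneg_left hF2 (by positivity : (0 : ℝ) ≤ δ ^ 2)
  rw [norm_add_sq_real, real_inner_smul_right, real_inner_comm, norm_smul,
    Real.norm_of_nonneg hδ, mul_pow]
  nlinarith

end

theorem one_add_add_rpow_le {a b R e : ℝ} (ha : 0 ≤ a) (hb : 0 ≤ b) (haR : a ≤ R)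
    (hbR : b ≤ R) (hR : 1 ≤ R) (he : 0 ≤ e) : (1 + a + b) ^ e ≤ 3 ^ e * R ^ e := by
  rw [← Real.mul_rpow (by norm_num) (by linarith)]
  exact Real.rpow_le_rpow (by linarith) (by linarith) he

theorem mul_rpow_neg_rpow_sq_le_one {δ α p : ℝ} (hδ : 0 < δ) (hδ1 : δ ≤ 1)
    (h : 2 * (α * p) ≤ 1) : δ * ((δ ^ (-α)) ^ p) ^ 2 ≤ 1 := by
  have hexp : δ * ((δ ^ (-α)) ^ p) ^ 2 = δ ^ (1 + -α * p * (2 : ℕ)) := by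
    rw [Real.rpow_add hδ, Real.rpow_one, Real.rpow_mul_natCast hδ.le, Real.rpow_mul hδ.le]
  rw [hexp]
  exact Real.rpow_le_one hδ.le hδ1 (by push_cast; linarith)

theorem projected_monotonicity_estimate_general {d : ℕ} (m : ℕ) (T L η q : ℝ)
    (hL : 0 < L) (hq : 2 ≤ q)
    (f : ℝ → EuclideanSpace ℝ (Fin d) → EuclideanSpace ℝ (Fin d))
    (g : Fin m → ℝ → EuclideanSpace ℝ (Fin d) → EuclideanSpace ℝ (Fin d))
    (hmono : ∀ t ∈ Set.Icc (0 : ℝ) T, ∀ x₁ x₂,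
      ⟪f t x₁ - f t x₂, x₁ - x₂⟫ + η * ∑ r, ‖g r t x₁ - g r t x₂‖ ^ 2 ≤ L * ‖x₁ - x₂‖ ^ 2)
    (hlip : ∀ t ∈ Set.Icc (0 : ℝ) T, ∀ x₁ x₂,
      ‖f t x₁ - f t x₂‖ ≤ L * (1 + ‖x₁‖ + ‖x₂‖) ^ (q - 1) * ‖x₁ - x₂‖) :
    ∃ C > 0, ∀ α δ : ℝ, 0 < α → α ≤ 1 / (2 * (q - 1)) → 0 < δ → δ ≤ 1 →
      ∀ t ∈ Set.Icc (0 : ℝ) T, ∀ x₁ x₂,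
      ‖ballProj δ α x₁ - ballProj δ α x₂
          + δ • (f t (ballProj δ α x₁) - f t (ballProj δ α x₂))‖ ^ 2
        + 2 * η * δ * ∑ r, ‖g r t (ballProj δ α x₁) - g r t (ballProj δ α x₂)‖ ^ 2
      ≤ (1 + C * δ) * ‖x₁ - x₂‖ ^ 2 := by
  have hq1 : 0 < q - 1 := by linarith
  refine ⟨2 * L + (L * 3 ^ (q - 1)) ^ 2, by positivity, ?_⟩
  intro α δ hα hα2 hδ hδ1 t ht x₁ x₂
  simp only [ballProj_eq_radialRetraction]
  set R := δ ^ (-α)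
  have hR : 1 ≤ R := Real.one_le_rpow_of_pos_of_le_one_of_nonpos hδ hδ1 (by linarith)
  have hR0 : 0 ≤ R := zero_le_one.trans hR
  set p₁ := radialRetraction R x₁
  set p₂ := radialRetraction R x₂
  have hlipR : ‖f t p₁ - f t p₂‖ ≤ L * (3 ^ (q - 1) * R ^ (q - 1)) * ‖p₁ - p₂‖ := by
    refine (hlip t ht p₁ p₂).trans ?_
    gcongr
    exact one_add_add_rpow_le (norm_nonneg p₁) (norm_nonneg p₂)
      (norm_radialRetraction_le hR0 x₁) (norm_radialRetraction_le hR0 x₂) hR hq1.le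
  have hdrift : δ * (L * (3 ^ (q - 1) * R ^ (q - 1))) ^ 2 ≤ (L * 3 ^ (q - 1)) ^ 2 := by
    have hαq : 2 * (α * (q - 1)) ≤ 1 := by rw [le_div_iff₀ (by positivity)] at hα2; linarith
    rw [← mul_assoc, mul_pow, mul_left_comm]
    exact mul_le_of_le_one_right (by positivity) (mul_rpow_neg_rpow_sq_le_one hδ hδ1 hαq)
  have hproj : ‖p₁ - p₂‖ ^ 2 ≤ ‖x₁ - x₂‖ ^ 2 := by
    gcongr
    exact norm_radialRetraction_sub_le hR0 x₁ x₂
  refine (norm_add_smul_sq_add_le hδ.le (hmono t ht p₁ p₂) hlipR).trans ?_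
  exact mul_le_mul (by gcongr) hproj (by positivity) (by positivity)

/-- Key stability estimate for the projected Milstein method (Lemma 4.3): under the global
monotonicity condition and the local Lipschitz bound for `f`, there is `C` (depending only
on `L`) such that for all `α ∈ (0, 1/(2(q-1))]` and `δ ∈ (0,1]`,
`|x₁° - x₂° + δ(f(t,x₁°) - f(t,x₂°))|² + 2ηδ ∑_r |gʳ(t,x₁°) - gʳ(t,x₂°)|²
  ≤ (1 + Cδ)|x₁ - x₂|²`. -/
theorem projected_monotonicity_estimate {d : ℕ} (m : ℕ) (T L η q : ℝ) (hT : 0 < T)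
    (hL : 0 < L) (hη : 1 / 2 < η) (hq : 2 ≤ q)
    (f : ℝ → EuclideanSpace ℝ (Fin d) → EuclideanSpace ℝ (Fin d))
    (g : Fin m → ℝ → EuclideanSpace ℝ (Fin d) → EuclideanSpace ℝ (Fin d))
    (hmono : ∀ t ∈ Set.Icc (0 : ℝ) T, ∀ x₁ x₂,
      ⟪f t x₁ - f t x₂, x₁ - x₂⟫ + η * ∑ r, ‖g r t x₁ - g r t x₂‖ ^ 2 ≤ L * ‖x₁ - x₂‖ ^ 2)
    (hlip : ∀ t ∈ Set.Icc (0 : ℝ) T, ∀ x₁ x₂,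
      ‖f t x₁ - f t x₂‖ ≤ L * (1 + ‖x₁‖ + ‖x₂‖) ^ (q - 1) * ‖x₁ - x₂‖) :
    ∃ C > 0, ∀ α δ : ℝ, 0 < α → α ≤ 1 / (2 * (q - 1)) → 0 < δ → δ ≤ 1 →
      ∀ t ∈ Set.Icc (0 : ℝ) T, ∀ x₁ x₂,
      ‖ballProj δ α x₁ - ballProj δ α x₂
          + δ • (f t (ballProj δ α x₁) - f t (ballProj δ α x₂))‖ ^ 2
        + 2 * η * δ * ∑ r, ‖g r t (ballProj δ α x₁) - g r t (ballProj δ α x₂)‖ ^ 2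
      ≤ (1 + C * δ) * ‖x₁ - x₂‖ ^ 2 :=
  projected_monotonicity_estimate_general m T L η q hL hq f g hmono hlip
end

section
/- Under the same assumptions (f continuous, one-sided Lipschitz with constant L, |f(t,0)| ≤ L for all t, δ ∈ (0,1/L), F_δ(t,x) = x - δf(t,x) bijective), the inverse satisfies the growth bound |F_δ^{-1}(t,x)| ≤ (1 - Lδ)^{-1}(Lδ + |x|) for all x ∈ ℝ^d and t ∈ [0,T]. -/
open scoped RealInnerProductSpace

/-
Write `y = F_δ⁻¹(t,x)`, so that `y = x + δ f(t,y)`. Pairing with `y` and splitting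
`f(t,y) = (f(t,y) - f(t,0)) + f(t,0)`, the one-sided Lipschitz condition and `|f(t,0)| ≤ L` give
`|y|² ≤ |x| |y| + δ L |y|² + δ L |y|`; dividing by `|y|` yields `(1 - Lδ) |y| ≤ Lδ + |x|`.
-/

section InnerProductSpace

variable {E : Type*} [NormedAddCommGroup E] [InnerProductSpace ℝ E]

theorem inner_apply_self_le_of_oneSidedLipschitz {g : E → E} {L : ℝ}
    (hone : ∀ x₁ x₂, ⟪g x₁ - g x₂, x₁ - x₂⟫ ≤ L * ‖x₁ - x₂‖ ^ 2) (y : E) :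
    ⟪g y, y⟫ ≤ L * ‖y‖ ^ 2 + ‖g 0‖ * ‖y‖ := by
  have hdiff : ⟪g y - g 0, y⟫ ≤ L * ‖y‖ ^ 2 := by simpa only [sub_zero] using hone y 0
  have hzero : ⟪g 0, y⟫ ≤ ‖g 0‖ * ‖y‖ := real_inner_le_norm _ _
  calc ⟪g y, y⟫ = ⟪g y - g 0, y⟫ + ⟪g 0, y⟫ := by rw [inner_sub_left]; ring
    _ ≤ L * ‖y‖ ^ 2 + ‖g 0‖ * ‖y‖ := add_le_add hdiff hzero

theorem norm_le_of_eq_add_smul {x y v : E} {L M δ : ℝ} (hδ : 0 ≤ δ) (hLδ : L * δ < 1)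
    (hM : 0 ≤ M) (hv : ⟪v, y⟫ ≤ L * ‖y‖ ^ 2 + M * ‖y‖) (hy : y = x + δ • v) :
    ‖y‖ ≤ (1 - L * δ)⁻¹ * (M * δ + ‖x‖) := by
  have hsq : ‖y‖ ^ 2 ≤ ‖x‖ * ‖y‖ + δ * (L * ‖y‖ ^ 2 + M * ‖y‖) :=
    calc ‖y‖ ^ 2 = ⟪x, y⟫ + δ * ⟪v, y⟫ := by
          rw [← real_inner_self_eq_norm_sq]
          nth_rewrite 1 [hy]
          rw [inner_add_left, real_inner_smul_left]
      _ ≤ ‖x‖ * ‖y‖ + δ * (L * ‖y‖ ^ 2 + M * ‖y‖) :=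
          add_le_add (real_inner_le_norm x y) (mul_le_mul_of_nonneg_left hv hδ)
  have hlin : (1 - L * δ) * ‖y‖ ≤ M * δ + ‖x‖ := by
    rcases (norm_nonneg y).eq_or_lt with hzero | hpos
    · rw [← hzero, mul_zero]
      positivity
    · nlinarith
  rwa [le_inv_mul_iff₀ (by linarith)]

end InnerProductSpace

theorem Finv_growth_general {d : ℕ} (T L δ : ℝ) (hL : 0 < L)
    (hδ : 0 < δ) (hδL : δ < 1 / L)
    (f : ℝ → EuclideanSpace ℝ (Fin d) → EuclideanSpace ℝ (Fin d))
    (hone : ∀ t ∈ Set.Icc (0 : ℝ) T, ∀ x₁ x₂,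
      ⟪f t x₁ - f t x₂, x₁ - x₂⟫ ≤ L * ‖x₁ - x₂‖ ^ 2)
    (h0 : ∀ t ∈ Set.Icc (0 : ℝ) T, ‖f t 0‖ ≤ L)
    (hbij : ∀ t ∈ Set.Icc (0 : ℝ) T, Function.Bijective (fun x => x - δ • f t x)) :
    ∀ t ∈ Set.Icc (0 : ℝ) T, ∀ x : EuclideanSpace ℝ (Fin d),
      ‖Function.invFun (fun y => y - δ • f t y) x‖ ≤ (1 - L * δ)⁻¹ * (L * δ + ‖x‖) := by
  intro t ht x
  set y := Function.invFun (fun y => y - δ • f t y) x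
  have hy : y - δ • f t y = x := Function.rightInverse_invFun (hbij t ht).2 x
  have hLδ : L * δ < 1 := by rwa [lt_div_iff₀ hL, mul_comm] at hδL
  have hv : ⟪f t y, y⟫ ≤ L * ‖y‖ ^ 2 + L * ‖y‖ :=
    (inner_apply_self_le_of_oneSidedLipschitz (hone t ht) y).trans
      (by gcongr; exact h0 t ht)
  exact norm_le_of_eq_add_smul hδ.le hLδ hL.le hv (by rw [← hy, sub_add_cancel])

/-- Growth bound for the inverse of `F_δ(t,x) = x - δ f(t,x)`:
`|F_δ⁻¹(t,x)| ≤ (1 - Lδ)⁻¹ (Lδ + |x|)`. -/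
theorem Finv_growth {d : ℕ} (T L δ : ℝ) (hT : 0 < T) (hL : 0 < L)
    (hδ : 0 < δ) (hδL : δ < 1 / L)
    (f : ℝ → EuclideanSpace ℝ (Fin d) → EuclideanSpace ℝ (Fin d))
    (hcont : ∀ t ∈ Set.Icc (0 : ℝ) T, Continuous (f t))
    (hone : ∀ t ∈ Set.Icc (0 : ℝ) T, ∀ x₁ x₂,
      ⟪f t x₁ - f t x₂, x₁ - x₂⟫ ≤ L * ‖x₁ - x₂‖ ^ 2)
    (h0 : ∀ t ∈ Set.Icc (0 : ℝ) T, ‖f t 0‖ ≤ L)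
    (hbij : ∀ t ∈ Set.Icc (0 : ℝ) T, Function.Bijective (fun x => x - δ • f t x)) :
    ∀ t ∈ Set.Icc (0 : ℝ) T, ∀ x : EuclideanSpace ℝ (Fin d),
      ‖Function.invFun (fun y => y - δ • f t y) x‖ ≤ (1 - L * δ)⁻¹ * (L * δ + ‖x‖) :=
  Finv_growth_general T L δ hL hδ hδL f hone h0 hbij
end

section
/- Let f, g^r (r=1,…,m), and h^{r₁,r₂} (r₁,r₂ = 1,…,m) be functions from [0,T] × ℝ^d to ℝ^d with f continuous and satisfying, for constants L > 0, η₁ > 1, η₂ > 0: ⟨f(t,x₁)-f(t,x₂), x₁-x₂⟩ + η₁ ∑_r |g^r(t,x₁)-g^r(t,x₂)|² + η₂ ∑_{r₁,r₂} |h^{r₁,r₂}(t,x₁)-h^{r₁,r₂}(t,x₂)|² ≤ L|x₁-x₂|². Fix δ ∈ (0, h̄] with h̄ < 1/L, and let F_δ(t,x) = x - δf(t,x), which is a bijection in x. Then with C₁ = L(2-Lh̄)(1-Lh̄)^{-2}: |F_δ^{-1}(t,x₁)-F_δ^{-1}(t,x₂)|² + η₁δ ∑_r |g^r(t,F_δ^{-1}(t,x₁))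 - g^r(t,F_δ^{-1}(t,x₂))|² + η₂δ ∑_{r₁,r₂} |h^{r₁,r₂}(t,F_δ^{-1}(t,x₁)) - h^{r₁,r₂}(t,F_δ^{-1}(t,x₂))|² ≤ (1 + C₁δ)|x₁-x₂|² for all x₁, x₂ ∈ ℝ^d, t ∈ [0,T]. -/
/-!
Write `yᵢ = F_δ⁻¹(t, xᵢ)`, so that `y₁ - y₂ = (x₁ - x₂) + δ (f(t, y₁) - f(t, y₂))`. Pairing this
with `y₁ - y₂` and inserting the monotonicity condition gives
`(1 - Lδ)|y₁ - y₂|² + δ G ≤ |y₁ - y₂| |x₁ - x₂|`, where `G ≥ 0` collects the `g`- and `h`-terms;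
an elementary inequality for reals turns this into the bound `(1 - Lδ)⁻² |x₁ - x₂|²` for the
whole left-hand side. Finally `(1 - Lδ)⁻² ≤ 1 + C₁ δ` is the chord bound for the convex function `a ↦ (1 - a)⁻²` on `[0, L h̄]`.
-/

open scoped RealInnerProductSpace

lemma sq_add_le_of_mul_sq_add_le_mul {c p q D : ℝ} (hc : 0 < c) (hc2 : c ≤ 2) (hD : 0 ≤ D)
    (h : c * p ^ 2 + D ≤ p * q) : p ^ 2 + D ≤ (c ^ 2)⁻¹ * q ^ 2 := by
  rw [inv_mul_eq_div, le_div_iff₀ (by positivity)]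
  have hs : 0 ≤ p * (q - c * p) := by nlinarith
  -- with `q = c p + s`: `q² - c² (p² + p s) = c (2 - c) p s + s² ≥ 0`
  nlinarith [mul_nonneg hs (mul_nonneg hc.le (sub_nonneg.2 hc2)), sq_nonneg (q - c * p)]

lemma norm_sub_sq_add_mul_le_of_inner_add_le {E : Type*} [NormedAddCommGroup E]
    [InnerProductSpace ℝ E] {φ : E → E} {L δ G : ℝ} {y₁ y₂ : E} (hL : 0 ≤ L) (hδ : 0 ≤ δ)
    (hLδ : L * δ < 1) (hG : 0 ≤ G)
    (hmono : ⟪φ y₁ - φ y₂, y₁ - y₂⟫ + G ≤ L * ‖y₁ - y₂‖ ^ 2) :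
    ‖y₁ - y₂‖ ^ 2 + δ * G
      ≤ ((1 - L * δ) ^ 2)⁻¹ * ‖(y₁ - δ • φ y₁) - (y₂ - δ • φ y₂)‖ ^ 2 := by
  set u := y₁ - y₂
  set v := (y₁ - δ • φ y₁) - (y₂ - δ • φ y₂)
  have hu : u = v + δ • (φ y₁ - φ y₂) := by simp only [u, v]; module
  have hsq : ‖u‖ ^ 2 = ⟪u, v⟫ + δ * ⟪φ y₁ - φ y₂, u⟫ := by
    conv_lhs => rw [← real_inner_self_eq_norm_sq, hu, inner_add_left, real_inner_smul_left]
    rw [← hu, real_inner_comm]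
  have hkey : (1 - L * δ) * ‖u‖ ^ 2 + δ * G ≤ ‖u‖ * ‖v‖ := by
    nlinarith [real_inner_le_norm u v, mul_le_mul_of_nonneg_left hmono hδ]
  exact sq_add_le_of_mul_sq_add_le_mul (by linarith) (by nlinarith) (mul_nonneg hδ hG) hkey

/-- Chord bound for the convex function `a ↦ (1 - a)⁻²` on `[0, b]`. -/
lemma inv_one_sub_sq_le_of_le {a b : ℝ} (ha : 0 ≤ a) (hab : a ≤ b) (hb : b < 1) :
    ((1 - a) ^ 2)⁻¹ ≤ 1 + a * (2 - b) / (1 - b) ^ 2 := by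
  have hb' : 0 < 1 - b := by linarith
  rw [one_add_div (by positivity), inv_eq_one_div,
    div_le_div_iff₀ (by nlinarith) (by positivity)]
  have hfac : 0 ≤ a * (b - a) * ((3 - 2 * b) - (2 - b) * a) := by
    have : 0 ≤ (3 - 2 * b) - (2 - b) * a := by nlinarith
    have : 0 ≤ b - a := by linarith
    positivity
  nlinarith [hfac]

theorem ssbm_stability_estimate_general {d : ℕ} (m : ℕ) (T L η₁ η₂ hbar δ : ℝ)
    (hL : 0 < L) (hη₁ : 1 < η₁) (hη₂ : 0 < η₂)
    (hhbar1 : hbar < 1 / L) (hδ : 0 < δ) (hδbar : δ ≤ hbar)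
    (f : ℝ → EuclideanSpace ℝ (Fin d) → EuclideanSpace ℝ (Fin d))
    (g : Fin m → ℝ → EuclideanSpace ℝ (Fin d) → EuclideanSpace ℝ (Fin d))
    (h : Fin m → Fin m → ℝ → EuclideanSpace ℝ (Fin d) → EuclideanSpace ℝ (Fin d))
    (hmono : ∀ t ∈ Set.Icc (0 : ℝ) T, ∀ x₁ x₂,
      ⟪f t x₁ - f t x₂, x₁ - x₂⟫ + η₁ * ∑ r, ‖g r t x₁ - g r t x₂‖ ^ 2
        + η₂ * ∑ r₁, ∑ r₂, ‖h r₁ r₂ t x₁ - h r₁ r₂ t x₂‖ ^ 2 ≤ L * ‖x₁ - x₂‖ ^ 2)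
    (hbij : ∀ t ∈ Set.Icc (0 : ℝ) T, Function.Bijective (fun x => x - δ • f t x)) :
    ∀ t ∈ Set.Icc (0 : ℝ) T, ∀ x₁ x₂ : EuclideanSpace ℝ (Fin d),
      ‖Function.invFun (fun x => x - δ • f t x) x₁
          - Function.invFun (fun x => x - δ • f t x) x₂‖ ^ 2
        + η₁ * δ * ∑ r, ‖g r t (Function.invFun (fun x => x - δ • f t x) x₁)
            - g r t (Function.invFun (fun x => x - δ • f t x) x₂)‖ ^ 2
        + η₂ * δ * ∑ r₁, ∑ r₂,
            ‖h r₁ r₂ t (Function.invFun (fun x => x - δ • f t x) x₁)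
              - h r₁ r₂ t (Function.invFun (fun x => x - δ • f t x) x₂)‖ ^ 2
      ≤ (1 + (L * (2 - L * hbar) * ((1 - L * hbar) ^ 2)⁻¹) * δ) * ‖x₁ - x₂‖ ^ 2 := by
  intro t ht x₁ x₂
  have hinv : ∀ x, Function.invFun (fun x => x - δ • f t x) x
      - δ • f t (Function.invFun (fun x => x - δ • f t x) x) = x :=
    Function.rightInverse_invFun (hbij t ht).surjective
  set y₁ := Function.invFun (fun x => x - δ • f t x) x₁
  set y₂ := Function.invFun (fun x => x - δ • f t x) x₂
  have hLhbar : L * hbar < 1 := by rwa [lt_div_iff₀ hL, mul_comm] at hhbar1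
  have hLδ : L * δ ≤ L * hbar := mul_le_mul_of_nonneg_left hδbar hL.le
  have hstep := norm_sub_sq_add_mul_le_of_inner_add_le hL.le hδ.le (hLδ.trans_lt hLhbar)
    (by positivity) ((add_assoc _ _ _).symm.trans_le (hmono t ht y₁ y₂))
  rw [hinv, hinv] at hstep
  calc _ = _ := by ring
    _ ≤ _ := hstep
    _ ≤ _ := by
      gcongr
      exact (inv_one_sub_sq_le_of_le (by positivity) hLδ hLhbar).trans_eq (by ring)

/-- Key stability estimate for the split-step backward Milstein method (inequality (6.3)):
under the strengthened monotonicity condition involving `f`, `gʳ` and `h^{r₁,r₂}`,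
`|F_δ⁻¹(t,x₁) - F_δ⁻¹(t,x₂)|² + η₁δ ∑_r |gʳ∘F_δ⁻¹ - ...|² + η₂δ ∑_{r₁,r₂} |h∘F_δ⁻¹ - ...|²
  ≤ (1 + C₁δ)|x₁ - x₂|²` with `C₁ = L(2 - Lh̄)(1 - Lh̄)⁻²`. -/
theorem ssbm_stability_estimate {d : ℕ} (m : ℕ) (T L η₁ η₂ hbar δ : ℝ) (hT : 0 < T)
    (hL : 0 < L) (hη₁ : 1 < η₁) (hη₂ : 0 < η₂)
    (hhbar : 0 < hbar) (hhbar1 : hbar < 1 / L) (hδ : 0 < δ) (hδbar : δ ≤ hbar)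
    (f : ℝ → EuclideanSpace ℝ (Fin d) → EuclideanSpace ℝ (Fin d))
    (g : Fin m → ℝ → EuclideanSpace ℝ (Fin d) → EuclideanSpace ℝ (Fin d))
    (h : Fin m → Fin m → ℝ → EuclideanSpace ℝ (Fin d) → EuclideanSpace ℝ (Fin d))
    (hcont : ∀ t ∈ Set.Icc (0 : ℝ) T, Continuous (f t))
    (hmono : ∀ t ∈ Set.Icc (0 : ℝ) T, ∀ x₁ x₂,
      ⟪f t x₁ - f t x₂, x₁ - x₂⟫ + η₁ * ∑ r, ‖g r t x₁ - g r t x₂‖ ^ 2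
        + η₂ * ∑ r₁, ∑ r₂, ‖h r₁ r₂ t x₁ - h r₁ r₂ t x₂‖ ^ 2 ≤ L * ‖x₁ - x₂‖ ^ 2)
    (hbij : ∀ t ∈ Set.Icc (0 : ℝ) T, Function.Bijective (fun x => x - δ • f t x)) :
    ∀ t ∈ Set.Icc (0 : ℝ) T, ∀ x₁ x₂ : EuclideanSpace ℝ (Fin d),
      ‖Function.invFun (fun x => x - δ • f t x) x₁
          - Function.invFun (fun x => x - δ • f t x) x₂‖ ^ 2
        + η₁ * δ * ∑ r, ‖g r t (Function.invFun (fun x => x - δ • f t x) x₁)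
            - g r t (Function.invFun (fun x => x - δ • f t x) x₂)‖ ^ 2
        + η₂ * δ * ∑ r₁, ∑ r₂,
            ‖h r₁ r₂ t (Function.invFun (fun x => x - δ • f t x) x₁)
              - h r₁ r₂ t (Function.invFun (fun x => x - δ • f t x) x₂)‖ ^ 2
      ≤ (1 + (L * (2 - L * hbar) * ((1 - L * hbar) ^ 2)⁻¹) * δ) * ‖x₁ - x₂‖ ^ 2 :=
  ssbm_stability_estimate_general m T L η₁ η₂ hbar δ hL hη₁ hη₂ hhbar1 hδ hδbar f g h hmono hbij
end

section
/- Let f : [0,T] × ℝ^d → ℝ^d be continuous with one-sided Lipschitz constant L > 0 and polynomial growth |f(t,x)| ≤ L(1+|x|)^q for q ≥ 2. Let h̄ ∈ (0,1/L), δ ∈ (0,h̄], and F_δ(t,x) = x - δf(t,x), a bijection in x. Then there exists a constant C₂ depending only on L, h̄, q such that |F_δ^{-1}(t,x) - x| ≤ δ C₂ (1 + |x|^q) for all x ∈ ℝ^d, t ∈ [0,T]. -/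
/-!
Write `y = F_δ⁻¹(t, x)`, so that `y - x = δ f(t, y)`. Pairing `x = y - δ f(t, y)` with `y` and using
the one-sided Lipschitz bound against the point `0` gives `(1 - δL) ‖y‖ ≤ ‖x‖ + δL`, hence
`(1 - h̄L)(1 + ‖y‖) ≤ 1 + ‖x‖`. The growth bound then yields
`‖y - x‖ = δ ‖f(t, y)‖ ≤ δ L (1 + ‖x‖)^q / (1 - h̄L)^q ≤ δ L 2^(q-1) (1 + ‖x‖^q) / (1 - h̄L)^q`.
-/

open scoped RealInnerProductSpace

section OneSidedLipschitz

variable {E : Type*} [NormedAddCommGroup E] [InnerProductSpace ℝ E] {f : E → E} {L : ℝ}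

theorem inner_self_apply_le_of_oneSidedLipschitz
    (hf : ∀ x₁ x₂, ⟪f x₁ - f x₂, x₁ - x₂⟫ ≤ L * ‖x₁ - x₂‖ ^ 2) (y : E) :
    ⟪f y, y⟫ ≤ L * ‖y‖ ^ 2 + ‖f 0‖ * ‖y‖ := by
  have hlip : ⟪f y - f 0, y⟫ ≤ L * ‖y‖ ^ 2 := by simpa using hf y 0
  have hcs : ⟪f 0, y⟫ ≤ ‖f 0‖ * ‖y‖ := real_inner_le_norm _ _
  rw [inner_sub_left] at hlip
  linarith

theorem one_sub_mul_norm_le_of_sub_smul_eq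
    (hf : ∀ x₁ x₂, ⟪f x₁ - f x₂, x₁ - x₂⟫ ≤ L * ‖x₁ - x₂‖ ^ 2) {δ : ℝ} (hδ : 0 ≤ δ)
    {x y : E} (hxy : y - δ • f y = x) :
    (1 - δ * L) * ‖y‖ ≤ ‖x‖ + δ * ‖f 0‖ := by
  have hinner : ‖y‖ ^ 2 = ⟪x, y⟫ + δ * ⟪f y, y⟫ := by
    rw [← hxy, inner_sub_left, real_inner_smul_left, real_inner_self_eq_norm_sq]
    ring
  have hcs : ⟪x, y⟫ ≤ ‖x‖ * ‖y‖ := real_inner_le_norm _ _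
  have hfy := mul_le_mul_of_nonneg_left (inner_self_apply_le_of_oneSidedLipschitz hf y) hδ
  have hsq : ‖y‖ * ((1 - δ * L) * ‖y‖) ≤ ‖y‖ * (‖x‖ + δ * ‖f 0‖) := by nlinarith
  rcases (norm_nonneg y).eq_or_lt with hy | hy
  · rw [← hy, mul_zero]
    positivity
  · exact le_of_mul_le_mul_left hsq hy

end OneSidedLipschitz

theorem Real.one_add_rpow_le {a q : ℝ} (ha : 0 ≤ a) (hq : 1 ≤ q) :
    (1 + a) ^ q ≤ 2 ^ (q - 1) * (1 + a ^ q) := by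
  have h := NNReal.rpow_add_le_mul_rpow_add_rpow 1 ⟨a, ha⟩ hq
  rw [NNReal.one_rpow] at h
  exact_mod_cast h

theorem Finv_first_order_general {d : ℕ} (T L q hbar δ : ℝ) (hL : 0 < L) (hq : 2 ≤ q)
    (hhbar1 : hbar < 1 / L) (hδ : 0 < δ) (hδbar : δ ≤ hbar)
    (f : ℝ → EuclideanSpace ℝ (Fin d) → EuclideanSpace ℝ (Fin d))
    (hone : ∀ t ∈ Set.Icc (0 : ℝ) T, ∀ x₁ x₂,
      ⟪f t x₁ - f t x₂, x₁ - x₂⟫ ≤ L * ‖x₁ - x₂‖ ^ 2)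
    (hgrowth : ∀ t ∈ Set.Icc (0 : ℝ) T, ∀ x, ‖f t x‖ ≤ L * (1 + ‖x‖) ^ q)
    (hbij : ∀ t ∈ Set.Icc (0 : ℝ) T, Function.Bijective (fun x => x - δ • f t x)) :
    ∃ C₂ > 0, ∀ t ∈ Set.Icc (0 : ℝ) T, ∀ x : EuclideanSpace ℝ (Fin d),
      ‖Function.invFun (fun y => y - δ • f t y) x - x‖ ≤ δ * C₂ * (1 + ‖x‖ ^ q) := by
  set m := 1 - hbar * L
  have hm : 0 < m := by rw [lt_div_iff₀ hL] at hhbar1; linarith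
  refine ⟨L * 2 ^ (q - 1) / m ^ q, by positivity, fun t ht x => ?_⟩
  set y := Function.invFun (fun y => y - δ • f t y) x
  have hxy : y - δ • f t y = x := Function.invFun_eq ((hbij t ht).2 x)
  have hf0 : ‖f t 0‖ ≤ L := by simpa using hgrowth t ht 0
  have hyx : 1 + ‖y‖ ≤ (1 + ‖x‖) / m := by
    have hy := one_sub_mul_norm_le_of_sub_smul_eq (hone t ht) hδ.le hxy
    have hδf0 : δ * ‖f t 0‖ ≤ δ * L := mul_le_mul_of_nonneg_left hf0 hδ.le
    have hδL : δ * L ≤ hbar * L := mul_le_mul_of_nonneg_right hδbar hL.le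
    rw [le_div_iff₀ hm]
    nlinarith [norm_nonneg y]
  have hyx_pow : (1 + ‖y‖) ^ q ≤ (1 + ‖x‖) ^ q / m ^ q := by
    rw [← Real.div_rpow (by positivity) hm.le]
    exact Real.rpow_le_rpow (by positivity) hyx (by linarith)
  calc ‖y - x‖ = δ * ‖f t y‖ := by rw [← hxy, sub_sub_cancel, norm_smul,
        Real.norm_of_nonneg hδ.le]
    _ ≤ δ * (L * ((1 + ‖x‖) ^ q / m ^ q)) := by
        gcongr
        exact (hgrowth t ht y).trans (by gcongr)
    _ ≤ δ * (L * (2 ^ (q - 1) * (1 + ‖x‖ ^ q) / m ^ q)) := by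
        gcongr
        exact Real.one_add_rpow_le (norm_nonneg x) (by linarith)
    _ = δ * (L * 2 ^ (q - 1) / m ^ q) * (1 + ‖x‖ ^ q) := by ring

/-- First-order estimate for the inverse: `|F_δ⁻¹(t,x) - x| ≤ δ C₂ (1 + |x|^q)`. -/
theorem Finv_first_order {d : ℕ} (T L q hbar δ : ℝ) (hT : 0 < T) (hL : 0 < L) (hq : 2 ≤ q)
    (hhbar : 0 < hbar) (hhbar1 : hbar < 1 / L) (hδ : 0 < δ) (hδbar : δ ≤ hbar)
    (f : ℝ → EuclideanSpace ℝ (Fin d) → EuclideanSpace ℝ (Fin d))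
    (hcont : ∀ t ∈ Set.Icc (0 : ℝ) T, Continuous (f t))
    (hone : ∀ t ∈ Set.Icc (0 : ℝ) T, ∀ x₁ x₂,
      ⟪f t x₁ - f t x₂, x₁ - x₂⟫ ≤ L * ‖x₁ - x₂‖ ^ 2)
    (hgrowth : ∀ t ∈ Set.Icc (0 : ℝ) T, ∀ x, ‖f t x‖ ≤ L * (1 + ‖x‖) ^ q)
    (hbij : ∀ t ∈ Set.Icc (0 : ℝ) T, Function.Bijective (fun x => x - δ • f t x)) :
    ∃ C₂ > 0, ∀ t ∈ Set.Icc (0 : ℝ) T, ∀ x : EuclideanSpace ℝ (Fin d),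
      ‖Function.invFun (fun y => y - δ • f t y) x - x‖ ≤ δ * C₂ * (1 + ‖x‖ ^ q) :=
  Finv_first_order_general T L q hbar δ hL hq hhbar1 hδ hδbar f hone hgrowth hbij
end
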